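/- Let s > 1 be non-integer, let 𝔟 = 1 − 2(s − ⌊s⌋), and let m be an integer with 1 ≤ m ≤ ⌊s⌋. Then for every y > 0, ((D_𝔟 + 1)^{m} ψ_s)(y) = (⌊s⌋!/⌊s−m⌋!) · (Γ(s−m)/Γ(s)) · ψ_{s−m}(y). -/

import Mathlib

open MeasureTheory Real Filter Set

/-- The modified Bessel function of the second kind, for `y > 0` given by
`K_s(y) = ∫_0^∞ e^{−y·cosh t}·cosh(s·t) dt`. -/
noncomputable def besselK (s y : ℝ) : ℝ :=
  ∫ t in Set.Ioi (0 : ℝ), Real.exp (-(y * Real.cosh t)) * Real.cosh (s * t)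

/-- `ψ_s(y) = (2^{1−s}/Γ(s))·|y|^s·K_s(|y|)` for `y ≠ 0`, and `ψ_s(0) = 1`. -/
noncomputable def psi (s : ℝ) (y : ℝ) : ℝ :=
  if y = 0 then 1
  else (2 : ℝ) ^ (1 - s) / Real.Gamma s * |y| ^ s * besselK s |y|

/-- The operator `f ↦ D_b f + λ·f`, where `(D_b f)(y) = −f''(y) − (b/y)·f'(y)`. -/
noncomputable def DLam (b lam : ℝ) (f : ℝ → ℝ) : ℝ → ℝ :=
  fun y => -(deriv (deriv f) y) - b / y * deriv f y + lam * f y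

/-- The `n`-fold iterate `(D_b + λ)^n f`, computed pointwise. -/
noncomputable def DLamIter (b lam : ℝ) (n : ℕ) (f : ℝ → ℝ) : ℝ → ℝ :=
  (DLam b lam)^[n] f

open Topology

/-! On `(0, ∞)`, `ψ_s(y) = 2^{1-s}/Γ(s) · y^s K_s(y)`. Differentiating under the integral sign
gives `K_s' = -(K_{s+1} + K_{s-1})/2`, and integrating `d/dt (e^{-y cosh t} sinh(st))` over
`(0, ∞)` gives `K_{s+1} - K_{s-1} = (2s/y) K_s`. Together these yield `(y^s K_s)' = -y^s K_{s-1}`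
and `(D_b + 1)(y^s K_s) = (2s - 1 + b) y^{s-1} K_{s-1}`, so `(D_b + 1)^m` multiplies `y^s K_s` by
`∏_{j<m} (2(s-j) - 1 + b)` and lowers the order to `s - m`. For `b = 1 - 2(s - ⌊s⌋)` the
`j`-th factor is `2(⌊s⌋ - j)`, and since `s` is not an integer, `Γ(s - m) ≠ 0`. -/

noncomputable def besselKIntegrand (s y t : ℝ) : ℝ := exp (-(y * cosh t)) * cosh (s * t)

lemma besselK_eq_integral (s y : ℝ) : besselK s y = ∫ t in Ioi 0, besselKIntegrand s y t := rfl

lemma continuous_besselKIntegrand (s y : ℝ) : Continuous (besselKIntegrand s y) := by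
  unfold besselKIntegrand; fun_prop

lemma cosh_le_exp_abs (x : ℝ) : cosh x ≤ exp |x| := by
  rw [← cosh_abs, cosh_eq]
  linarith [exp_le_exp.2 (neg_le_self (abs_nonneg x))]

lemma abs_sinh_le_cosh (x : ℝ) : |sinh x| ≤ cosh x := by
  rw [abs_le]
  constructor <;> linarith [sinh_lt_cosh x, cosh_add_sinh x, exp_pos x]

lemma sq_div_four_le_cosh {t : ℝ} (ht : 0 ≤ t) : t ^ 2 / 4 ≤ cosh t := by
  rw [cosh_eq]
  linarith [quadratic_le_exp_of_nonneg ht, exp_pos (-t)]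

lemma mul_sub_mul_cosh_le (c : ℝ) {y t : ℝ} (hy : 0 < y) (ht : 0 ≤ t) :
    c * t - y * cosh t ≤ (c + 1) ^ 2 / y - t := by
  have hsq : 0 ≤ (y * t / 2 - (c + 1)) ^ 2 / y := by positivity
  have hexpand :
      (y * t / 2 - (c + 1)) ^ 2 / y = y * (t ^ 2 / 4) - (c + 1) * t + (c + 1) ^ 2 / y := by
    field_simp; ring
  nlinarith [mul_le_mul_of_nonneg_left (sq_div_four_le_cosh ht) hy.le]

lemma integrableOn_besselKIntegrand (s : ℝ) {y : ℝ} (hy : 0 < y) :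
    IntegrableOn (besselKIntegrand s y) (Ioi 0) := by
  have hdom : IntegrableOn (fun t => exp ((|s| + 1) ^ 2 / y) * exp (-1 * t)) (Ioi 0) :=
    (exp_neg_integrableOn_Ioi 0 one_pos).const_mul _
  refine hdom.mono' (continuous_besselKIntegrand s y).aestronglyMeasurable ?_
  filter_upwards [ae_restrict_mem measurableSet_Ioi] with t (ht : 0 < t)
  rw [besselKIntegrand, norm_mul, norm_of_nonneg (exp_pos _).le, norm_of_nonneg (cosh_pos _).le,
    ← exp_add]
  calc exp (-(y * cosh t)) * cosh (s * t) ≤ exp (-(y * cosh t)) * exp (|s| * t) := by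
        grw [cosh_le_exp_abs, abs_mul, abs_of_pos ht]
    _ = exp (|s| * t - y * cosh t) := by rw [← exp_add]; ring_nf
    _ ≤ exp ((|s| + 1) ^ 2 / y + -1 * t) :=
        exp_le_exp.2 (by linarith [mul_sub_mul_cosh_le |s| hy ht.le])

lemma cosh_mul_besselKIntegrand (s y t : ℝ) :
    cosh t * besselKIntegrand s y t
      = (besselKIntegrand (s + 1) y t + besselKIntegrand (s - 1) y t) / 2 := by
  simp only [besselKIntegrand, add_mul, sub_mul, one_mul, cosh_add, cosh_sub]; ring

lemma sinh_mul_exp_mul_sinh (s y t : ℝ) :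
    sinh t * (exp (-(y * cosh t)) * sinh (s * t))
      = (besselKIntegrand (s + 1) y t - besselKIntegrand (s - 1) y t) / 2 := by
  simp only [besselKIntegrand, add_mul, sub_mul, one_mul, cosh_add, cosh_sub]; ring

lemma hasDerivAt_besselK (s : ℝ) {y : ℝ} (hy : 0 < y) :
    HasDerivAt (besselK s) (-((besselK (s + 1) y + besselK (s - 1) y) / 2)) y := by
  have hbound : IntegrableOn (fun t => cosh t * besselKIntegrand s (y / 2) t) (Ioi 0) := by
    simp_rw [cosh_mul_besselKIntegrand]
    exact ((integrableOn_besselKIntegrand _ (half_pos hy)).add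
      (integrableOn_besselKIntegrand _ (half_pos hy))).div_const 2
  have key := hasDerivAt_integral_of_dominated_loc_of_deriv_le (μ := volume.restrict (Ioi 0))
    (F := fun x t => besselKIntegrand s x t) (F' := fun x t => -(cosh t * besselKIntegrand s x t))
    (Metric.ball_mem_nhds y (half_pos hy))
    (.of_forall fun x => (continuous_besselKIntegrand s x).aestronglyMeasurable)
    (integrableOn_besselKIntegrand s hy)
    (by unfold besselKIntegrand; fun_prop : Continuous _).aestronglyMeasurable
    (.of_forall fun t x hx => ?_) hbound (.of_forall fun t x _ => ?_)
  · have hint : ∫ t in Ioi 0, -(cosh t * besselKIntegrand s y t)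
        = -((besselK (s + 1) y + besselK (s - 1) y) / 2) := by
      simp_rw [cosh_mul_besselKIntegrand]
      rw [integral_neg, integral_div, integral_add (integrableOn_besselKIntegrand _ hy)
        (integrableOn_besselKIntegrand _ hy), besselK_eq_integral, besselK_eq_integral]
    exact hint ▸ key.2
  · have hx : y / 2 ≤ x := by linarith [(abs_lt.1 (mem_ball_iff_norm.1 hx)).1]
    rw [norm_neg, norm_of_nonneg (by unfold besselKIntegrand; positivity)]
    unfold besselKIntegrand
    gcongr
  · unfold besselKIntegrand
    exact (((hasDerivAt_id x).mul_const (cosh t)).neg.exp.mul_const _).congr_deriv (by simp; ring)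

lemma besselK_add_one_sub_besselK_sub_one (s : ℝ) {y : ℝ} (hy : 0 < y) :
    besselK (s + 1) y - besselK (s - 1) y = 2 * s / y * besselK s y := by
  set P : ℝ → ℝ := fun t => exp (-(y * cosh t)) * sinh (s * t)
  set P' : ℝ → ℝ := fun t =>
    -y * (sinh t * (exp (-(y * cosh t)) * sinh (s * t))) + s * besselKIntegrand s y t
  have hderiv : ∀ t, HasDerivAt P (P' t) t := fun t =>
    ((((hasDerivAt_cosh t).const_mul y).neg.exp).mul
      ((hasDerivAt_id t).const_mul s).sinh).congr_deriv (by simp [P', besselKIntegrand]; ring)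
  have hK := fun σ => integrableOn_besselKIntegrand σ hy
  have hsinh_int : ∫ t in Ioi 0, sinh t * (exp (-(y * cosh t)) * sinh (s * t))
      = (besselK (s + 1) y - besselK (s - 1) y) / 2 := by
    simp_rw [sinh_mul_exp_mul_sinh]
    rw [integral_div, integral_sub (hK _) (hK _), besselK_eq_integral, besselK_eq_integral]
  have hsinh : IntegrableOn (fun t => sinh t * (exp (-(y * cosh t)) * sinh (s * t))) (Ioi 0) := by
    simp_rw [sinh_mul_exp_mul_sinh]
    exact ((hK _).sub (hK _)).div_const 2
  have hP' : IntegrableOn P' (Ioi 0) := (hsinh.const_mul _).add ((hK s).const_mul s)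
  -- `|P| ≤ e^{-y cosh t} cosh(st)`, so `P` is integrable and hence vanishes at infinity
  have hP : IntegrableOn P (Ioi 0) := by
    refine (hK s).mono' (by fun_prop : Continuous P).aestronglyMeasurable (.of_forall fun t => ?_)
    rw [norm_mul, norm_of_nonneg (exp_pos _).le, besselKIntegrand]
    gcongr
    exact abs_sinh_le_cosh _
  have hFTC := integral_Ioi_of_hasDerivAt_of_tendsto' (fun t _ => hderiv t) hP'
    (tendsto_zero_of_hasDerivAt_of_integrableOn_Ioi (fun t _ => hderiv t) hP' hP)
  rw [integral_add (hsinh.const_mul _) ((hK s).const_mul s), integral_const_mul,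
    integral_const_mul, hsinh_int, ← besselK_eq_integral] at hFTC
  simp only [P, mul_zero, sinh_zero, sub_zero] at hFTC
  field_simp
  linarith

lemma hasDerivAt_rpow_mul_besselK (s : ℝ) {y : ℝ} (hy : 0 < y) :
    HasDerivAt (fun x => x ^ s * besselK s x) (-(y ^ s * besselK (s - 1) y)) y := by
  have hrec := besselK_add_one_sub_besselK_sub_one s hy
  refine ((hasDerivAt_rpow_const (Or.inl hy.ne')).mul (hasDerivAt_besselK s hy)).congr_deriv ?_
  rw [rpow_sub_one hy.ne']
  linear_combination (-(y ^ s) / 2) * hrec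

lemma hasDerivAt_rpow_mul_besselK_sub_one (s : ℝ) {y : ℝ} (hy : 0 < y) :
    HasDerivAt (fun x => x ^ s * besselK (s - 1) x)
      ((2 * s - 1) * y ^ (s - 1) * besselK (s - 1) y - y ^ s * besselK s y) y := by
  have hrec := besselK_add_one_sub_besselK_sub_one (s - 1) hy
  have hK := hasDerivAt_besselK (s - 1) hy
  rw [sub_add_cancel] at hrec hK
  refine ((hasDerivAt_rpow_const (Or.inl hy.ne')).mul hK).congr_deriv ?_
  rw [rpow_sub_one hy.ne']
  linear_combination (y ^ s / 2) * hrec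

lemma DLam_rpow_mul_besselK (b s : ℝ) {y : ℝ} (hy : 0 < y) :
    DLam b 1 (fun x => x ^ s * besselK s x) y
      = (2 * s - 1 + b) * (y ^ (s - 1) * besselK (s - 1) y) := by
  have hderiv : deriv (fun x => x ^ s * besselK s x) =ᶠ[𝓝 y]
      fun x => -(x ^ s * besselK (s - 1) x) := by
    filter_upwards [Ioi_mem_nhds hy] with x hx using (hasDerivAt_rpow_mul_besselK s hx).deriv
  simp only [DLam]
  rw [hderiv.deriv_eq, hderiv.eq_of_nhds, deriv.fun_neg,
    (hasDerivAt_rpow_mul_besselK_sub_one s hy).deriv, rpow_sub_one hy.ne']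
  field_simp
  ring

section Operator

variable {b lam : ℝ}

lemma DLamIter_succ (n : ℕ) (f : ℝ → ℝ) :
    DLamIter b lam (n + 1) f = DLam b lam (DLamIter b lam n f) :=
  Function.iterate_succ_apply' _ _ _

lemma DLam_eqOn {f g : ℝ → ℝ} {U : Set ℝ} (hU : IsOpen U) (h : EqOn f g U) :
    EqOn (DLam b lam f) (DLam b lam g) U := fun y hy => by
  have hfg : f =ᶠ[𝓝 y] g := Filter.eventually_of_mem (hU.mem_nhds hy) h
  simp only [DLam, hfg.deriv.deriv_eq, hfg.deriv_eq, h hy]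

lemma DLamIter_eqOn {f g : ℝ → ℝ} {U : Set ℝ} (hU : IsOpen U) (h : EqOn f g U) (n : ℕ) :
    EqOn (DLamIter b lam n f) (DLamIter b lam n g) U := by
  induction n with
  | zero => exact h
  | succ n ih => rw [DLamIter_succ, DLamIter_succ]; exact DLam_eqOn hU ih

lemma DLam_const_mul (c : ℝ) (f : ℝ → ℝ) :
    DLam b lam (fun x => c * f x) = fun x => c * DLam b lam f x := by
  have hf : deriv (fun x => c * f x) = fun x => c * deriv f x :=
    funext fun _ => deriv_const_mul_field c
  have hf' : deriv (fun x => c * deriv f x) = fun x => c * deriv (deriv f) x :=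
    funext fun _ => deriv_const_mul_field c
  funext y
  simp only [DLam, hf, hf']
  ring

lemma DLamIter_const_mul (c : ℝ) (f : ℝ → ℝ) (n : ℕ) :
    DLamIter b lam n (fun x => c * f x) = fun x => c * DLamIter b lam n f x := by
  induction n with
  | zero => rfl
  | succ n ih => rw [DLamIter_succ, DLamIter_succ, ih, DLam_const_mul]

end Operator

lemma DLamIter_rpow_mul_besselK (b s : ℝ) (k : ℕ) :
    EqOn (DLamIter b 1 k fun x => x ^ s * besselK s x)
      (fun x => (∏ j ∈ Finset.range k, (2 * (s - j) - 1 + b)) *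
        (x ^ (s - k) * besselK (s - k) x))
      (Ioi 0) := by
  induction k with
  | zero => intro y _; simp [DLamIter]
  | succ k ih =>
    intro y hy
    rw [DLamIter_succ, DLam_eqOn isOpen_Ioi ih hy]
    simp only [DLam_const_mul]
    rw [DLam_rpow_mul_besselK b (s - k) hy, Finset.prod_range_succ, Nat.cast_succ, ← sub_sub]
    ring

lemma psi_eqOn_Ioi (s : ℝ) :
    EqOn (psi s) (fun x => 2 ^ (1 - s) / Gamma s * (x ^ s * besselK s x)) (Ioi 0) := by
  intro y (hy : 0 < y)
  rw [psi, if_neg hy.ne', abs_of_pos hy, mul_assoc]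

lemma Nat.floor_sub_natCast_of_le {s : ℝ} {m : ℕ} (hm : m ≤ ⌊s⌋₊) : ⌊s - m⌋₊ = ⌊s⌋₊ - m := by
  rcases m.eq_zero_or_pos with rfl | hm0
  · simp
  have hadd := Nat.floor_add_natCast (sub_nonneg.2 ((Nat.le_floor_iff' hm0.ne').1 hm)) m
  rw [sub_add_cancel] at hadd
  omega

lemma Nat.cast_descFactorial_eq_prod_range {n k : ℕ} (h : k ≤ n) :
    (n.descFactorial k : ℝ) = ∏ j ∈ Finset.range k, ((n : ℝ) - j) := by
  rw [Nat.descFactorial_eq_prod_range, Nat.cast_prod]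
  exact Finset.prod_congr rfl fun j hj => Nat.cast_sub (by simp at hj; omega)

lemma Nat.cast_descFactorial_eq_factorial_div {n k : ℕ} (h : k ≤ n) :
    (n.descFactorial k : ℝ) = n.factorial / (n - k).factorial := by
  rw [← Nat.factorial_mul_descFactorial h, Nat.cast_mul]
  field_simp

theorem psi_iterate_eq_general (s : ℝ) (hni : ∀ n : ℤ, s ≠ n)
    (b : ℝ) (hb : b = 1 - 2 * (s - (⌊s⌋₊ : ℝ)))
    (m : ℕ) (hm2 : m ≤ ⌊s⌋₊) :
    ∀ y : ℝ, 0 < y →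
      DLamIter b 1 m (psi s) y
        = (Nat.factorial ⌊s⌋₊ : ℝ) / (Nat.factorial ⌊s - (m : ℝ)⌋₊ : ℝ) *
            (Real.Gamma (s - m) / Real.Gamma s) * psi (s - m) y := by
  intro y hy
  have hΓ : Gamma (s - m) ≠ 0 := Gamma_ne_zero fun n h => hni (m - n) (by push_cast; linarith)
  have hprod : ∏ j ∈ Finset.range m, (2 * (s - j) - 1 + b)
      = 2 ^ m * (⌊s⌋₊.factorial / ⌊s - (m : ℝ)⌋₊.factorial) := by
    calc ∏ j ∈ Finset.range m, (2 * (s - j) - 1 + b)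
        = ∏ j ∈ Finset.range m, 2 * ((⌊s⌋₊ : ℝ) - j) :=
          Finset.prod_congr rfl fun j _ => by rw [hb]; ring
      _ = _ := by
          rw [Finset.prod_mul_distrib, Finset.prod_const, Finset.card_range,
            ← Nat.cast_descFactorial_eq_prod_range hm2, Nat.floor_sub_natCast_of_le hm2,
            Nat.cast_descFactorial_eq_factorial_div hm2]
  rw [DLamIter_eqOn isOpen_Ioi (psi_eqOn_Ioi s) m hy]
  simp only [DLamIter_const_mul]
  rw [DLamIter_rpow_mul_besselK b s m hy, psi_eqOn_Ioi (s - m) hy, hprod,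
    show (1 : ℝ) - (s - m) = 1 - s + m by ring, rpow_add two_pos, rpow_natCast]
  field_simp

/-- for non-integer `s > 1`, `𝔟 = 1 − 2(s − ⌊s⌋)` and `1 ≤ m ≤ ⌊s⌋`,
`(D_𝔟 + 1)^m ψ_s = (⌊s⌋!/⌊s−m⌋!)·(Γ(s−m)/Γ(s))·ψ_{s−m}` on `(0,∞)`. -/
theorem psi_iterate_eq (s : ℝ) (hs : 1 < s) (hni : ∀ n : ℤ, s ≠ n)
    (b : ℝ) (hb : b = 1 - 2 * (s - (⌊s⌋₊ : ℝ)))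
    (m : ℕ) (hm1 : 1 ≤ m) (hm2 : m ≤ ⌊s⌋₊) :
    ∀ y : ℝ, 0 < y →
      DLamIter b 1 m (psi s) y
        = (Nat.factorial ⌊s⌋₊ : ℝ) / (Nat.factorial ⌊s - (m : ℝ)⌋₊ : ℝ) *
            (Real.Gamma (s - m) / Real.Gamma s) * psi (s - m) y :=
  psi_iterate_eq_general s hni b hb m hm2
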